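/- The number of triwords of size n lying on the spine (union of maximal-length saturated chains) of the Hochschild lattice is 2^n. -/

import Mathlib

def IsTriword {n : ℕ} (u : Fin n → Fin 3) : Prop :=
  (∀ i : Fin n, (i : ℕ) = 0 → u i ≠ 2) ∧
  ∀ i j : Fin n, i < j → u i = 0 → u j ≠ 1

/-- Decode a binary word into a spine word. -/
def spineG {n : ℕ} (v : Fin n → Fin 2) : Fin n → Fin 3 := fun i =>
  if _ : ∃ j, i ≤ j ∧ v j = 1 then
    if h0 : (i : ℕ) = 0 then 1 else (v ⟨(i : ℕ) - 1, by omega⟩).succ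
  else 0

/-- Encode a spine word as a binary word. -/
def spineF {n : ℕ} (u : Fin n → Fin 3) : Fin n → Fin 2 := fun i =>
  if h : (i : ℕ) + 1 < n then
    if u ⟨(i : ℕ) + 1, h⟩ = 2 then 1
    else if u i ≠ 0 ∧ u ⟨(i : ℕ) + 1, h⟩ = 0 then 1 else 0
  else if u i ≠ 0 then 1 else 0

lemma fin2_cases (x : Fin 2) : x = 0 ∨ x = 1 := by fin_cases x <;> simp

lemma fin3_cases (x : Fin 3) : x = 0 ∨ x = 1 ∨ x = 2 := by fin_cases x <;> simp

lemma spineF_of_lt {n : ℕ} (u : Fin n → Fin 3) (i : Fin n) (h : (i : ℕ) + 1 < n) :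
    spineF u i = if u ⟨(i : ℕ) + 1, h⟩ = 2 then 1
      else if u i ≠ 0 ∧ u ⟨(i : ℕ) + 1, h⟩ = 0 then 1 else 0 := dif_pos h

lemma spineF_of_last {n : ℕ} (u : Fin n → Fin 3) (i : Fin n) (h : ¬ (i : ℕ) + 1 < n) :
    spineF u i = if u i ≠ 0 then 1 else 0 := dif_neg h

lemma spineG_eq_zero {n : ℕ} (v : Fin n → Fin 2) (i : Fin n)
    (h : ¬ ∃ j, i ≤ j ∧ v j = 1) : spineG v i = 0 := by
  simp [spineG, h]

lemma spineG_ne_zero {n : ℕ} (v : Fin n → Fin 2) (i : Fin n)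
    (h : ∃ j, i ≤ j ∧ v j = 1) : spineG v i ≠ 0 := by
  simp only [spineG, dif_pos h]
  split
  · decide
  · exact Fin.succ_ne_zero _

lemma spineG_spine {n : ℕ} (v : Fin n → Fin 2) :
    ∀ i j : Fin n, i < j → spineG v i = 0 → spineG v j = 0 := by
  intro i j hij hi
  apply spineG_eq_zero
  rintro ⟨k, hjk, hk⟩
  exact spineG_ne_zero v i ⟨k, le_trans (le_of_lt hij) hjk, hk⟩ hi

lemma spineG_mem {n : ℕ} (v : Fin n → Fin 2) :
    IsTriword (spineG v) ∧ ∀ i j : Fin n, i < j → spineG v i = 0 → spineG v j = 0 := by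
  refine ⟨⟨?_, ?_⟩, spineG_spine v⟩
  · intro i hi0
    unfold spineG
    split <;> try split
    all_goals decide
  · intro i j hij hi
    rw [spineG_spine v i j hij hi]
    decide

lemma spineF_spineG {n : ℕ} (v : Fin n → Fin 2) : spineF (spineG v) = v := by
  funext i
  by_cases h : (i : ℕ) + 1 < n
  · rw [spineF_of_lt _ i h]
    set i1 : Fin n := ⟨(i : ℕ) + 1, h⟩ with hi1
    by_cases hP : ∃ j, i1 ≤ j ∧ v j = 1
    · have hGi1 : spineG v i1 = (v i).succ := by
        unfold spineG
        rw [dif_pos hP, dif_neg (by simp [hi1])]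
        exact congrArg Fin.succ (congrArg v (Fin.ext (by simp [hi1])))
      rw [hGi1]
      rcases fin2_cases (v i) with hv | hv <;> rw [hv]
      · rw [if_neg (by decide), if_neg (fun hc => absurd hc.2 (by decide))]
      · rw [if_pos (by decide)]
    · have hGi1 : spineG v i1 = 0 := spineG_eq_zero _ _ hP
      rw [hGi1]
      by_cases hvi : v i = 1
      · have : spineG v i ≠ 0 := spineG_ne_zero v i ⟨i, le_refl i, hvi⟩
        simp [this, hvi]
      · have hPi : ¬ ∃ j, i ≤ j ∧ v j = 1 := by
          rintro ⟨j, hij, hj⟩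
          rcases eq_or_lt_of_le hij with rfl | hlt
          · exact hvi hj
          · exact hP ⟨j, by simp [hi1, Fin.le_def]; omega, hj⟩
        have h0 : spineG v i = 0 := spineG_eq_zero v i hPi
        rcases fin2_cases (v i) with hv | hv
        · simp [h0, hv]
        · exact absurd hv hvi
  · rw [spineF_of_last _ i h]
    by_cases hvi : v i = 1
    · have : spineG v i ≠ 0 := spineG_ne_zero v i ⟨i, le_refl i, hvi⟩
      simp [this, hvi]
    · have hPi : ¬ ∃ j, i ≤ j ∧ v j = 1 := by
        rintro ⟨j, hij, hj⟩
        have : j = i := Fin.ext (by have := j.2; rw [Fin.le_def] at hij; omega)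
        exact hvi (this ▸ hj)
      have h0 : spineG v i = 0 := spineG_eq_zero v i hPi
      rcases fin2_cases (v i) with hv | hv
      · simp [h0, hv]
      · exact absurd hv hvi

lemma ne_zero_of_le {n : ℕ} (u : Fin n → Fin 3)
    (hs : ∀ i j : Fin n, i < j → u i = 0 → u j = 0)
    {i j : Fin n} (hij : i ≤ j) (hj : u j ≠ 0) : u i ≠ 0 := by
  intro h0
  rcases eq_or_lt_of_le hij with rfl | hlt
  · exact hj h0
  · exact hj (hs i j hlt h0)

lemma key {n : ℕ} (u : Fin n → Fin 3)
    (hs : ∀ i j : Fin n, i < j → u i = 0 → u j = 0) (i : Fin n) :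
    (∃ j, i ≤ j ∧ spineF u j = 1) ↔ u i ≠ 0 := by
  constructor
  · rintro ⟨j, hij, hj⟩
    by_cases h : (j : ℕ) + 1 < n
    · rw [spineF_of_lt _ j h] at hj
      split_ifs at hj with h2 h3
      · have hj1 : i ≤ (⟨(j : ℕ) + 1, h⟩ : Fin n) := by
          rw [Fin.le_def] at hij ⊢; simp; omega
        exact ne_zero_of_le u hs hj1 (by rw [h2]; decide)
      · exact ne_zero_of_le u hs hij h3.1
      · exact absurd hj (by decide)
    · rw [spineF_of_last _ j h] at hj
      split_ifs at hj with h2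
      · exact ne_zero_of_le u hs hij h2
      · exact absurd hj (by decide)
  · intro hi
    classical
    set T : Finset (Fin n) := Finset.univ.filter (fun j => u j ≠ 0) with hT
    have hiT : i ∈ T := by simp [hT, hi]
    have hne : T.Nonempty := ⟨i, hiT⟩
    set m := T.max' hne with hm
    have him : i ≤ m := T.le_max' i hiT
    have hmT : m ∈ T := T.max'_mem hne
    have hum : u m ≠ 0 := by simpa [hT] using hmT
    refine ⟨m, him, ?_⟩
    by_cases h : (m : ℕ) + 1 < n
    · rw [spineF_of_lt _ m h]
      have hnext : u ⟨(m : ℕ) + 1, h⟩ = 0 := by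
        by_contra hne'
        have : (⟨(m : ℕ) + 1, h⟩ : Fin n) ∈ T := by simp [hT, hne']
        have := T.le_max' _ this
        rw [Fin.le_def] at this
        simp at this
        exact absurd this (lt_irrefl m)
      rw [hnext]
      simp [hum]
    · rw [spineF_of_last _ m h]
      simp [hum]

lemma spineG_spineF {n : ℕ} (u : Fin n → Fin 3)
    (ht : IsTriword u) (hs : ∀ i j : Fin n, i < j → u i = 0 → u j = 0) :
    spineG (spineF u) = u := by
  funext i
  by_cases hui : u i = 0
  · rw [spineG_eq_zero _ i (by rw [key u hs i]; simpa using hui), hui]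
  · have hP : ∃ j, i ≤ j ∧ spineF u j = 1 := (key u hs i).mpr hui
    unfold spineG
    rw [dif_pos hP]
    by_cases hi0 : (i : ℕ) = 0
    · rw [dif_pos hi0]
      have h2 := ht.1 i hi0
      rcases fin3_cases (u i) with h | h | h
      · exact absurd h hui
      · rw [h]
      · exact absurd h h2
    · rw [dif_neg hi0]
      have hlt : ((⟨(i : ℕ) - 1, by omega⟩ : Fin n) : ℕ) + 1 < n := by
        simp; omega
      rw [spineF_of_lt _ _ hlt]
      have hidx : (⟨((⟨(i : ℕ) - 1, by omega⟩ : Fin n) : ℕ) + 1, hlt⟩ : Fin n) = i :=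
        Fin.ext (by simp; omega)
      rw [hidx]
      rcases fin3_cases (u i) with h | h | h
      · exact absurd h hui
      · rw [h, if_neg (by decide), if_neg (fun hc => absurd hc.2 (by decide))]
        decide
      · rw [h, if_pos rfl]
        decide

theorem card_spine (n : ℕ) (hn : 1 ≤ n) :
    Nat.card {u : Fin n → Fin 3 //
      IsTriword u ∧ ∀ i j : Fin n, i < j → u i = 0 → u j = 0} = 2 ^ n := by
  have e : (Fin n → Fin 2) ≃ {u : Fin n → Fin 3 //
      IsTriword u ∧ ∀ i j : Fin n, i < j → u i = 0 → u j = 0} :=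
    { toFun := fun v => ⟨spineG v, spineG_mem v⟩
      invFun := fun u => spineF u.1
      left_inv := fun v => spineF_spineG v
      right_inv := fun u => Subtype.ext (spineG_spineF u.1 u.2.1 u.2.2) }
  rw [← Nat.card_congr e]
  simp [Nat.card_eq_fintype_card]
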